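/- In the symmetric coercive setting, the pressure component of the solution of the mixed problem satisfies ‖p‖_Q ≤ (1/β)‖f ∘ Π_{K_a^⊥}‖_{V'} + (‖a‖/β²)‖g‖_{Q'} ≤ (1/β)(‖a‖/α)^{1/2}‖f‖_{(K_a^⊥)'} + (‖a‖/β²)‖g‖_{Q'}, where Π_{K_a^⊥} is the a-orthogonal projection onto K_a^⊥ := {v : a(v,w)=0 ∀w∈K}. -/

import Mathlib

/-! Test the first equation with a `v` such that `b v = ⟪p, ·⟫` and `‖v‖ ≤ ‖p‖ / β`, so that
`‖p‖² = b v p`. As `v - Π v ∈ K`, `b v p = f (Π v) - a (u_g, Π v)` for any lift `u_g` of `g`,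
because `u - u_g ∈ K` is `a`-orthogonal to `Π v`; take `‖u_g‖ ≤ ‖g‖ / β`. Pythagoras in the energy
inner product, `a (Π v, Π v) ≤ a (v, v)`, together with Cauchy–Schwarz for `a` bounds the second
term by `‖a‖ ‖u_g‖ ‖v‖`. With coercivity the same Pythagoras gives `‖Π v‖ ≤ (‖a‖ / α)^{1/2} ‖v‖`,
which is the second inequality. -/

open Set

/-- Dual (semi) norm of a functional `f : V → ℝ`, tested only on the subset `U`. -/
noncomputable def dualSemiNorm {V : Type*} [NormedAddCommGroup V] (U : Set V) (f : V → ℝ) : ℝ :=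
  sSup ((fun v => |f v| / ‖v‖) '' (U \ {0}))

section DualSemiNorm

variable {V : Type*} [NormedAddCommGroup V] {U : Set V} {f : V → ℝ}

theorem dualSemiNorm_nonneg : 0 ≤ dualSemiNorm U f :=
  Real.sSup_nonneg <| by rintro _ ⟨v, -, rfl⟩; positivity

theorem dualSemiNorm_le {C : ℝ} (hC : 0 ≤ C) (h : ∀ v ∈ U, v ≠ 0 → |f v| ≤ C * ‖v‖) :
    dualSemiNorm U f ≤ C :=
  Real.sSup_le (by
    rintro _ ⟨v, ⟨hv, hv0⟩, rfl⟩
    exact div_le_of_le_mul₀ (norm_nonneg v) hC (h v hv hv0)) hC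

theorem abs_le_dualSemiNorm_mul_norm {C : ℝ} (hC : ∀ v ∈ U, |f v| ≤ C * ‖v‖)
    {v : V} (hv : v ∈ U) (hv0 : v ≠ 0) : |f v| ≤ dualSemiNorm U f * ‖v‖ := by
  have hbdd : BddAbove ((fun v => |f v| / ‖v‖) '' (U \ {0})) := by
    refine ⟨C, ?_⟩
    rintro _ ⟨w, ⟨hw, hw0⟩, rfl⟩
    exact (div_le_iff₀ (norm_pos_iff.2 hw0)).2 (hC w hw)
  exact (div_le_iff₀ (norm_pos_iff.2 hv0)).1 (le_csSup hbdd ⟨v, ⟨hv, hv0⟩, rfl⟩)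

theorem abs_comp_le_dualSemiNorm_mul_norm [NormedSpace ℝ V] (f : V →L[ℝ] ℝ) {P : V → V}
    {c : ℝ} (hP : ∀ v, ‖P v‖ ≤ c * ‖v‖) {v : V} (hv0 : v ≠ 0) :
    |f (P v)| ≤ dualSemiNorm univ (fun v => f (P v)) * ‖v‖ :=
  abs_le_dualSemiNorm_mul_norm (C := ‖f‖ * c)
    (fun w _ => (f.le_opNorm _).trans <| by rw [mul_assoc]; gcongr; exact hP w) (mem_univ v) hv0

theorem dualSemiNorm_univ_comp_le [NormedSpace ℝ V] (f : V →L[ℝ] ℝ) {P : V → V} {c : ℝ}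
    (hc : 0 ≤ c) (hPU : ∀ v, P v ∈ U) (hP : ∀ v, ‖P v‖ ≤ c * ‖v‖) :
    dualSemiNorm univ (fun v => f (P v)) ≤ c * dualSemiNorm U (fun v => f v) := by
  have hD := dualSemiNorm_nonneg (U := U) (f := fun v => f v)
  refine dualSemiNorm_le (by positivity) fun v _ _ => ?_
  rcases eq_or_ne (P v) 0 with hPv | hPv
  · rw [hPv, map_zero, abs_zero]
    positivity
  calc |f (P v)| ≤ dualSemiNorm U (fun v => f v) * ‖P v‖ :=
        abs_le_dualSemiNorm_mul_norm (fun w _ => f.le_opNorm w) (hPU v) hPv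
    _ ≤ dualSemiNorm U (fun v => f v) * (c * ‖v‖) := by gcongr; exact hP v
    _ = c * dualSemiNorm U (fun v => f v) * ‖v‖ := by ring

end DualSemiNorm

section SymmetricForm

variable {V : Type*} [NormedAddCommGroup V] [NormedSpace ℝ V] (a : V →L[ℝ] V →L[ℝ] ℝ)

theorem apply_self_le_opNorm_mul_sq (v : V) : a v v ≤ ‖a‖ * ‖v‖ ^ 2 :=
  calc a v v ≤ ‖a v v‖ := le_abs_self _
    _ ≤ ‖a‖ * ‖v‖ * ‖v‖ := a.le_opNorm₂ v v
    _ = ‖a‖ * ‖v‖ ^ 2 := by ring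

variable {a} (hsym : ∀ v w : V, a v w = a w v) (hpos : ∀ v : V, 0 ≤ a v v)
include hsym hpos

theorem apply_sq_le_apply_self_mul_apply_self (x y : V) : a x y ^ 2 ≤ a x x * a y y := by
  have : a x y * a y x ≤ a x x * a y y :=
    LinearMap.BilinForm.apply_mul_apply_le_of_forall_zero_le
      ((ContinuousLinearMap.coeLM ℝ).comp a.toLinearMap) hpos x y
  rwa [← hsym x y, ← sq] at this

theorem apply_self_le_of_apply_sub_eq_zero {x y : V} (h : a x (y - x) = 0) :
    a x x ≤ a y y := by
  have hy : a y y = a x x + 2 * a x (y - x) + a (y - x) (y - x) := by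
    conv_lhs => rw [← add_sub_cancel x y]
    simp only [map_add, add_apply, hsym (y - x) x]
    ring
  linarith [hpos (y - x)]

theorem abs_apply_le_of_apply_self_le {x y : V} (h : a x x ≤ a y y) (z : V) :
    |a z x| ≤ ‖a‖ * ‖z‖ * ‖y‖ := by
  refine abs_le_of_sq_le_sq ?_ (by positivity)
  calc a z x ^ 2 ≤ a z z * a x x := apply_sq_le_apply_self_mul_apply_self hsym hpos z x
    _ ≤ (‖a‖ * ‖z‖ ^ 2) * (‖a‖ * ‖y‖ ^ 2) :=
        mul_le_mul (apply_self_le_opNorm_mul_sq a z) (h.trans (apply_self_le_opNorm_mul_sq a y))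
          (hpos x) (by positivity)
    _ = (‖a‖ * ‖z‖ * ‖y‖) ^ 2 := by ring

end SymmetricForm

theorem norm_le_sqrt_mul_norm_of_apply_self_le {V : Type*} [NormedAddCommGroup V]
    [NormedSpace ℝ V] {a : V →L[ℝ] V →L[ℝ] ℝ} {α : ℝ} (hα : 0 < α)
    (hcoer : ∀ v : V, a v v ≥ α * ‖v‖ ^ 2) {x y : V} (h : a x x ≤ a y y) :
    ‖x‖ ≤ √(‖a‖ / α) * ‖y‖ := by
  have hsq : ‖x‖ ^ 2 ≤ ‖a‖ / α * ‖y‖ ^ 2 := by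
    rw [div_mul_eq_mul_div, le_div_iff₀ hα]
    linarith [hcoer x, apply_self_le_opNorm_mul_sq a y]
  calc ‖x‖ = √(‖x‖ ^ 2) := (Real.sqrt_sq (norm_nonneg x)).symm
    _ ≤ √(‖a‖ / α * ‖y‖ ^ 2) := Real.sqrt_le_sqrt hsq
    _ = √(‖a‖ / α) * ‖y‖ := by rw [Real.sqrt_mul (by positivity), Real.sqrt_sq (norm_nonneg y)]

theorem norm_le_of_abs_apply_le {V Q : Type*} [NormedAddCommGroup V] [NormedSpace ℝ V]
    [NormedAddCommGroup Q] [InnerProductSpace ℝ Q] (b : V →L[ℝ] Q →L[ℝ] ℝ) {β C : ℝ}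
    (hβ : 0 < β) (hBsurj : ∀ h : Q →L[ℝ] ℝ, ∃ v : V, b v = h ∧ ‖v‖ ≤ (1 / β) * ‖h‖)
    (hC : 0 ≤ C) {p : Q} (hp : ∀ v, |b v p| ≤ C * ‖v‖) : ‖p‖ ≤ C / β := by
  rcases (norm_nonneg p).eq_or_lt with hp0 | hp0
  · rw [← hp0]
    positivity
  obtain ⟨v, hv, hvnorm⟩ := hBsurj (innerSL ℝ p)
  rw [innerSL_apply_norm] at hvnorm
  refine le_of_mul_le_mul_right ?_ hp0
  calc ‖p‖ * ‖p‖ = b v p := by rw [hv, innerSL_apply_apply, real_inner_self_eq_norm_sq, sq]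
    _ ≤ C * ‖v‖ := (le_abs_self _).trans (hp v)
    _ ≤ C * (1 / β * ‖p‖) := by gcongr
    _ = C / β * ‖p‖ := by ring

theorem apply_eq_sub_apply_of_apply_sub_eq_zero {V Q : Type*} [NormedAddCommGroup V]
    [NormedSpace ℝ V] [NormedAddCommGroup Q] [NormedSpace ℝ Q] {a : V →L[ℝ] V →L[ℝ] ℝ}
    {b : V →L[ℝ] Q →L[ℝ] ℝ} {f : V →L[ℝ] ℝ} {u u' v w : V} {p : Q}
    (hsol : ∀ v, a u v + b v p = f v) (hvw : b (v - w) p = 0) (hw : a (u - u') w = 0) :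
    b v p = f w - a u' w := by
  have hf := hsol (v - w)
  simp only [map_sub, sub_apply] at hf hvw hw
  linear_combination hsol v - hf + hvw - hw

theorem stmt7_general
    {V Q : Type*} [NormedAddCommGroup V] [InnerProductSpace ℝ V]
    [NormedAddCommGroup Q] [InnerProductSpace ℝ Q]
    (a : V →L[ℝ] V →L[ℝ] ℝ) (b : V →L[ℝ] Q →L[ℝ] ℝ)
    (hsym : ∀ v w : V, a v w = a w v)
    (α : ℝ) (hα : 0 < α) (hcoer : ∀ v : V, a v v ≥ α * ‖v‖ ^ 2)
    (K : Set V) (hK : K = {v : V | ∀ q : Q, b v q = 0})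
    (Kaperp : Set V) (hKaperp : Kaperp = {v : V | ∀ w ∈ K, a v w = 0})
    (P : V → V)
    (hproj : ∀ v : V, P v ∈ Kaperp ∧ v - P v ∈ K)
    (β : ℝ) (hβ : 0 < β)
    (hBsurj : ∀ h : Q →L[ℝ] ℝ, ∃ v : V, b v = h ∧ ‖v‖ ≤ (1 / β) * ‖h‖)
    (f : V →L[ℝ] ℝ) (g : Q →L[ℝ] ℝ) (u : V) (p : Q)
    (hsol1 : ∀ v : V, a u v + b v p = f v) (hsol2 : ∀ q : Q, b u q = g q) :
    ‖p‖ ≤ (1 / β) * dualSemiNorm Set.univ (fun v => f (P v)) + (‖a‖ / β ^ 2) * ‖g‖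
    ∧ (1 / β) * dualSemiNorm Set.univ (fun v => f (P v)) + (‖a‖ / β ^ 2) * ‖g‖
      ≤ (1 / β) * Real.sqrt (‖a‖ / α) * dualSemiNorm Kaperp (fun v => f v)
        + (‖a‖ / β ^ 2) * ‖g‖ := by
  subst hK hKaperp
  have hpos : ∀ v, 0 ≤ a v v := fun v => (by positivity : 0 ≤ α * ‖v‖ ^ 2).trans (hcoer v)
  have hPa : ∀ v, a (P v) (P v) ≤ a v v := fun v =>
    apply_self_le_of_apply_sub_eq_zero hsym hpos ((hproj v).1 _ (hproj v).2)
  have hPnorm : ∀ v, ‖P v‖ ≤ √(‖a‖ / α) * ‖v‖ := fun v =>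
    norm_le_sqrt_mul_norm_of_apply_self_le hα hcoer (hPa v)
  obtain ⟨ug, hug, hugnorm⟩ := hBsurj g
  have hu : ∀ v, a (u - ug) (P v) = 0 := fun v => by
    rw [hsym]
    exact (hproj v).1 _ fun q => by simp [hsol2, hug]
  set D := dualSemiNorm univ (fun v => f (P v))
  have hD : 0 ≤ D := dualSemiNorm_nonneg
  refine ⟨?_, ?_⟩
  · have hbound : ∀ v, |b v p| ≤ (D + ‖a‖ * (1 / β * ‖g‖)) * ‖v‖ := by
      intro v
      rcases eq_or_ne v 0 with rfl | hv0
      · simp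
      calc |b v p| = |f (P v) - a ug (P v)| := by
            rw [apply_eq_sub_apply_of_apply_sub_eq_zero hsol1 ((hproj v).2 p) (hu v)]
        _ ≤ D * ‖v‖ + ‖a‖ * ‖ug‖ * ‖v‖ := (abs_sub _ _).trans <| add_le_add
            (abs_comp_le_dualSemiNorm_mul_norm f hPnorm hv0)
            (abs_apply_le_of_apply_self_le hsym hpos (hPa v) ug)
        _ ≤ (D + ‖a‖ * (1 / β * ‖g‖)) * ‖v‖ := by rw [add_mul]; gcongr
    calc ‖p‖ ≤ (D + ‖a‖ * (1 / β * ‖g‖)) / β :=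
          norm_le_of_abs_apply_le b hβ hBsurj (by positivity) hbound
      _ = 1 / β * D + ‖a‖ / β ^ 2 * ‖g‖ := by field_simp
  · have hcomp := dualSemiNorm_univ_comp_le f (Real.sqrt_nonneg _) (fun v => (hproj v).1) hPnorm
    rw [mul_assoc]
    gcongr

/-- Refined stability estimate for `p` in the symmetric coercive case:
`‖p‖ ≤ (1/β)‖f ∘ Π_{K_a^⊥}‖_{V'} + (‖a‖/β²)‖g‖
     ≤ (1/β)(‖a‖/α)^{1/2}‖f‖_{(K_a^⊥)'} + (‖a‖/β²)‖g‖`. -/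
theorem stmt7
    {V Q : Type*} [NormedAddCommGroup V] [InnerProductSpace ℝ V] [CompleteSpace V]
    [NormedAddCommGroup Q] [InnerProductSpace ℝ Q] [CompleteSpace Q]
    (a : V →L[ℝ] V →L[ℝ] ℝ) (b : V →L[ℝ] Q →L[ℝ] ℝ)
    (hsym : ∀ v w : V, a v w = a w v)
    (α : ℝ) (hα : 0 < α) (hcoer : ∀ v : V, a v v ≥ α * ‖v‖ ^ 2)
    (K : Set V) (hK : K = {v : V | ∀ q : Q, b v q = 0})
    (Kaperp : Set V) (hKaperp : Kaperp = {v : V | ∀ w ∈ K, a v w = 0})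
    (P : V → V)
    (hproj : ∀ v : V, P v ∈ Kaperp ∧ v - P v ∈ K)
    (β : ℝ) (hβ : 0 < β)
    (hBsurj : ∀ h : Q →L[ℝ] ℝ, ∃ v : V, b v = h ∧ ‖v‖ ≤ (1 / β) * ‖h‖)
    (f : V →L[ℝ] ℝ) (g : Q →L[ℝ] ℝ) (u : V) (p : Q)
    (hsol1 : ∀ v : V, a u v + b v p = f v) (hsol2 : ∀ q : Q, b u q = g q) :
    ‖p‖ ≤ (1 / β) * dualSemiNorm Set.univ (fun v => f (P v)) + (‖a‖ / β ^ 2) * ‖g‖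
    ∧ (1 / β) * dualSemiNorm Set.univ (fun v => f (P v)) + (‖a‖ / β ^ 2) * ‖g‖
      ≤ (1 / β) * Real.sqrt (‖a‖ / α) * dualSemiNorm Kaperp (fun v => f v)
        + (‖a‖ / β ^ 2) * ‖g‖ :=
  stmt7_general a b hsym α hα hcoer K hK Kaperp hKaperp P hproj β hβ hBsurj f g u p hsol1 hsol2
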